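/- Let X be a compact Hausdorff space, S ⊆ X̄ and k ≥ 2. Let the k-restriction of S be ℜᵏS = {(x_{kn})_{n≥0} : (x_n)_{n≥0} ∈ S}. Then H^t_X(ℜᵏS) ≤ k · H^t_X(S). -/
import Mathlib


open Set Filter Topology
open scoped ENNReal

/-- An open cover of a topological space: a family of open sets whose union is the whole space. -/
def IsOpenCover {Z : Type*} [TopologicalSpace Z] (𝒰 : Set (Set Z)) : Prop :=
  (∀ U ∈ 𝒰, IsOpen U) ∧ ⋃₀ 𝒰 = Set.univ

/-- `coverNum S 𝒰` : the minimal cardinality `N_{S/Z}(𝒰)` of a finite subfamily of `𝒰`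
whose union contains `S` (junk value `0` if there is no such finite subfamily). -/
noncomputable def coverNum {Z : Type*} (S : Set Z) (𝒰 : Set (Set Z)) : ℕ :=
  sInf {m | ∃ F : Finset (Set Z), ↑F ⊆ 𝒰 ∧ S ⊆ ⋃₀ (F : Set (Set Z)) ∧ F.card = m}

/-- The cover `𝒰̄ⁿ` of the sequence space `ℕ → Z`, consisting of the sets
`U_{i_0} × ⋯ × U_{i_{n-1}} × Z × Z × ⋯` with the `U_{i_j}` members of `𝒰`. -/
def seqCover {Z : Type*} (𝒰 : Set (Set Z)) (n : ℕ) : Set (Set (ℕ → Z)) :=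
  {V | ∃ U : ℕ → Set Z, (∀ i < n, U i ∈ 𝒰) ∧ V = {x : ℕ → Z | ∀ i < n, x i ∈ U i}}

/-- The topological entropy `H^t(S,𝒰)` of `S ⊆ Z̄ = ℕ → Z` relative to the cover `𝒰`. -/
noncomputable def entropyRel {Z : Type*} (S : Set (ℕ → Z)) (𝒰 : Set (Set Z)) : ℝ≥0∞ :=
  Filter.atTop.limsup fun n : ℕ =>
    ENNReal.ofReal ((1 / n : ℝ) * Real.log (coverNum S (seqCover 𝒰 n)))

/-- The topological entropy `H^t_Z(S)` of `S` as a subset of the sequence space `Z̄ = ℕ → Z`. -/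
noncomputable def topEntropy (Z : Type*) [TopologicalSpace Z] (S : Set (ℕ → Z)) : ℝ≥0∞ :=
  ⨆ (𝒰 : Set (Set Z)) (_ : IsOpenCover 𝒰), entropyRel S 𝒰

lemma seqCover_isOpen {Z : Type*} [TopologicalSpace Z] {𝒰 : Set (Set Z)}
    (h : ∀ U ∈ 𝒰, IsOpen U) {n : ℕ} {V : Set (ℕ → Z)} (hV : V ∈ seqCover 𝒰 n) : IsOpen V := by
  obtain ⟨U, hU, rfl⟩ := hV
  have : {x : ℕ → Z | ∀ i < n, x i ∈ U i} = Set.pi {i | i < n} U := rfl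
  rw [this]
  exact isOpen_set_pi (Set.finite_Iio n) (fun i hi => h _ (hU i hi))

lemma exists_finite_seq_subcover {Z : Type*} [TopologicalSpace Z] [CompactSpace Z]
    {𝒰 : Set (Set Z)} (h𝒰 : IsOpenCover 𝒰) (S : Set (ℕ → Z)) (n : ℕ) :
    {m | ∃ F : Finset (Set (ℕ → Z)), ↑F ⊆ seqCover 𝒰 n ∧
      S ⊆ ⋃₀ (F : Set (Set (ℕ → Z))) ∧ F.card = m}.Nonempty := by
  classical
  have hcov : (Set.univ : Set (ℕ → Z)) ⊆ ⋃ V ∈ seqCover 𝒰 n, (id V : Set (ℕ → Z)) := by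
    intro x _
    have hx : ∀ i : ℕ, ∃ U ∈ 𝒰, x i ∈ U := by
      intro i
      have : x i ∈ ⋃₀ 𝒰 := by rw [h𝒰.2]; trivial
      exact this
    choose U hU hxU using hx
    exact Set.mem_biUnion ⟨U, fun i _ => hU i, rfl⟩ (fun i _ => hxU i)
  obtain ⟨b', hb'sub, hfin, hsub⟩ := isCompact_univ.elim_finite_subcover_image
    (fun V hV => seqCover_isOpen h𝒰.1 hV) hcov
  refine ⟨hfin.toFinset.card, hfin.toFinset, ?_, ?_, rfl⟩
  · intro V hV
    exact hb'sub (by simpa using hV)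
  · intro x hx
    have := hsub (Set.mem_univ x)
    simp only [Set.mem_iUnion, id] at this
    obtain ⟨V, hV, hxV⟩ := this
    exact ⟨V, by simpa using hV, hxV⟩

lemma coverNum_restr_le {Z : Type*} [TopologicalSpace Z] [CompactSpace Z] {𝒰 : Set (Set Z)}
    (h𝒰 : IsOpenCover 𝒰) (S : Set (ℕ → Z)) {k : ℕ} (hk : 0 < k) (n : ℕ) :
    coverNum ((fun x : ℕ → Z => fun m => x (k * m)) '' S) (seqCover 𝒰 n)
      ≤ coverNum S (seqCover 𝒰 (k * n)) := by
  classical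
  obtain ⟨F, hF𝒰, hFS, hFcard⟩ :=
    Nat.sInf_mem (exists_finite_seq_subcover h𝒰 S (k * n))
  have h : ∀ V ∈ F, ∃ U : ℕ → Set Z, (∀ i < k * n, U i ∈ 𝒰) ∧
      V = {x : ℕ → Z | ∀ i < k * n, x i ∈ U i} := fun V hV => hF𝒰 hV
  choose! U hU hVeq using h
  set φ : Set (ℕ → Z) → Set (ℕ → Z) :=
    fun V => {y : ℕ → Z | ∀ j < n, y j ∈ U V (k * j)} with hφ
  have h1 : coverNum ((fun x : ℕ → Z => fun m => x (k * m)) '' S) (seqCover 𝒰 n)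
      ≤ (F.image φ).card := by
    refine Nat.sInf_le ⟨F.image φ, ?_, ?_, rfl⟩
    · intro W hW
      simp only [Finset.coe_image, Set.mem_image, Finset.mem_coe] at hW
      obtain ⟨V, hV, rfl⟩ := hW
      exact ⟨fun j => U V (k * j),
        fun j hj => hU V hV (k * j) (mul_lt_mul_of_pos_left hj hk), rfl⟩
    · rintro y ⟨x, hxS, rfl⟩
      obtain ⟨V, hVF, hxV⟩ := hFS hxS
      have hVF' : V ∈ F := by simpa using hVF
      refine ⟨φ V, by simp only [Finset.coe_image]; exact Set.mem_image_of_mem φ hVF', ?_⟩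
      intro j hj
      have hxV' : x ∈ {x : ℕ → Z | ∀ i < k * n, x i ∈ U V i} := (hVeq V hVF') ▸ hxV
      exact hxV' (k * j) (mul_lt_mul_of_pos_left hj hk)
  calc coverNum ((fun x : ℕ → Z => fun m => x (k * m)) '' S) (seqCover 𝒰 n)
      ≤ (F.image φ).card := h1
    _ ≤ F.card := Finset.card_image_le
    _ = coverNum S (seqCover 𝒰 (k * n)) := hFcard

lemma log_natCast_mono {a b : ℕ} (h : a ≤ b) : Real.log a ≤ Real.log b := by
  rcases Nat.eq_zero_or_pos a with rfl | ha
  · simp only [Nat.cast_zero, Real.log_zero]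
    rcases Nat.eq_zero_or_pos b with rfl | hb
    · simp
    · exact Real.log_nonneg (by exact_mod_cast hb)
  · exact Real.log_le_log (by exact_mod_cast ha) (by exact_mod_cast h)

lemma entropyRel_restr_le {Z : Type*} [TopologicalSpace Z] [CompactSpace Z] {𝒰 : Set (Set Z)}
    (h𝒰 : IsOpenCover 𝒰) (S : Set (ℕ → Z)) {k : ℕ} (hk : 0 < k) :
    entropyRel ((fun x : ℕ → Z => fun m => x (k * m)) '' S) 𝒰
      ≤ (k : ℝ≥0∞) * entropyRel S 𝒰 := by
  set g : ℕ → ℝ≥0∞ := fun n =>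
    ENNReal.ofReal ((1 / n : ℝ) * Real.log (coverNum S (seqCover 𝒰 n))) with hg
  have hk0 : ((k : ℝ)) ≠ 0 := by positivity
  have key : ∀ n : ℕ,
      ENNReal.ofReal ((1 / n : ℝ) * Real.log
        (coverNum ((fun x : ℕ → Z => fun m => x (k * m)) '' S) (seqCover 𝒰 n)))
      ≤ (k : ℝ≥0∞) * g (k * n) := by
    intro n
    have hlog : Real.log (coverNum ((fun x : ℕ → Z => fun m => x (k * m)) '' S) (seqCover 𝒰 n))
        ≤ Real.log (coverNum S (seqCover 𝒰 (k * n))) :=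
      log_natCast_mono (coverNum_restr_le h𝒰 S hk n)
    have hinv : (1 / (n : ℝ)) = (k : ℝ) * (1 / ((k * n : ℕ) : ℝ)) := by
      push_cast
      rw [mul_one_div,
        show ((k : ℝ) / ((k : ℝ) * (n : ℝ))) = ((k : ℝ) * 1) / ((k : ℝ) * (n : ℝ)) by rw [mul_one],
        mul_div_mul_left (1 : ℝ) (n : ℝ) hk0]
    calc ENNReal.ofReal ((1 / n : ℝ) * Real.log
          (coverNum ((fun x : ℕ → Z => fun m => x (k * m)) '' S) (seqCover 𝒰 n)))
        ≤ ENNReal.ofReal ((1 / n : ℝ) * Real.log (coverNum S (seqCover 𝒰 (k * n)))) :=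
          ENNReal.ofReal_le_ofReal (mul_le_mul_of_nonneg_left hlog (by positivity))
      _ = ENNReal.ofReal ((k : ℝ) * ((1 / ((k * n : ℕ) : ℝ)) *
            Real.log (coverNum S (seqCover 𝒰 (k * n))))) := by
          rw [← mul_assoc, ← hinv]
      _ = (k : ℝ≥0∞) * g (k * n) := by
          rw [ENNReal.ofReal_mul (by positivity), ENNReal.ofReal_natCast]
  calc entropyRel ((fun x : ℕ → Z => fun m => x (k * m)) '' S) 𝒰
      ≤ Filter.atTop.limsup (fun n : ℕ => (k : ℝ≥0∞) * g (k * n)) :=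
        Filter.limsup_le_limsup (Filter.Eventually.of_forall key)
    _ ≤ (k : ℝ≥0∞) * Filter.atTop.limsup (fun n : ℕ => g (k * n)) := by
        have : (fun n : ℕ => (k : ℝ≥0∞) * g (k * n)) =
            (fun _ : ℕ => (k : ℝ≥0∞)) * (fun n : ℕ => g (k * n)) := rfl
        rw [this]
        have hc : Filter.atTop.limsup (fun _ : ℕ => (k : ℝ≥0∞)) = (k : ℝ≥0∞) :=
          Filter.limsup_const _
        refine le_trans (ENNReal.limsup_mul_le' ?_ ?_) (le_of_eq (by rw [hc]))
        · left; rw [hc]; exact Nat.cast_ne_zero.mpr hk.ne'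
        · left; rw [hc]; exact ENNReal.natCast_ne_top k
    _ ≤ (k : ℝ≥0∞) * entropyRel S 𝒰 := by
        refine mul_le_mul_right ?_ _
        have hmap : Filter.Tendsto (fun n : ℕ => k * n) Filter.atTop Filter.atTop :=
          Filter.tendsto_atTop_mono (fun n => Nat.le_mul_of_pos_left n hk) Filter.tendsto_id
        calc Filter.atTop.limsup (fun n : ℕ => g (k * n))
            = Filter.limsup g (Filter.map (fun n : ℕ => k * n) Filter.atTop) :=
              (Filter.limsup_comp g (fun n : ℕ => k * n) Filter.atTop).symm
          _ ≤ Filter.limsup g Filter.atTop := Filter.limsup_le_limsup_of_le hmap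

theorem topEntropy_restriction_le {X : Type*} [TopologicalSpace X] [CompactSpace X] [T2Space X]
    (S : Set (ℕ → X)) (k : ℕ) (hk : 2 ≤ k) :
    topEntropy X ((fun x : ℕ → X => fun n => x (k * n)) '' S)
      ≤ (k : ℝ≥0∞) * topEntropy X S := by
  have hk0 : 0 < k := lt_of_lt_of_le two_pos hk
  refine iSup₂_le fun 𝒰 h𝒰 => ?_
  calc entropyRel ((fun x : ℕ → X => fun n => x (k * n)) '' S) 𝒰
      ≤ (k : ℝ≥0∞) * entropyRel S 𝒰 := entropyRel_restr_le h𝒰 S hk0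
    _ ≤ (k : ℝ≥0∞) * topEntropy X S :=
        mul_le_mul_right (le_iSup₂ (f := fun 𝒰 (_ : IsOpenCover 𝒰) => entropyRel S 𝒰) 𝒰 h𝒰) _
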